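/- Let P and Q be polynomial functions on the real vector space of J-invariant symmetric bilinear forms h on ℝ^m (together with the auxiliary variable det(h)^{-1}, defined on the open set where det(h) ≠ 0) and additional free real variables. If P = Q on the set where h is positive definite, then P = Q on the entire set where det(h) ≠ 0; in particular P = Q for h of any nondegenerate signature. -/

import Mathlib

/-!
Restrict both sides to the line `t ↦ h + t • 1` through a nondegenerate `J`-invariant symmetric
`h`. Every matrix on it is again symmetric and `J`-invariant (`J` is orthogonal), and it is positive
definite for all large `t`. Along the line, `P - Q` is a polynomial in `t` divided by a power of
`det (h + t • 1)`, itself a polynomial in `t`; the numerator vanishes for all large `t`, hence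
identically, and at `t = 0` the denominator is `det h ≠ 0`.
-/

open Matrix

/-- The standard complex structure `J e_i = e_{i+m̄}`, `J e_{i+m̄} = -e_i` as a matrix. -/
def Jstd (m : ℕ) : Matrix (Fin (m + m)) (Fin (m + m)) ℝ :=
  Matrix.of fun i j =>
    if i.val = j.val + m then 1 else if j.val = i.val + m then -1 else 0

open Polynomial

lemma Jstd_transpose (m : ℕ) : (Jstd m)ᵀ = -Jstd m := by
  ext i j
  simp only [transpose_apply, Jstd, Matrix.of_apply, Matrix.neg_apply]
  split_ifs <;> first | ring1 | omega

lemma Jstd_mul_self (m : ℕ) : Jstd m * Jstd m = -1 := by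
  ext i k
  simp only [mul_apply, Matrix.neg_apply, one_apply, Fin.ext_iff, Jstd, Matrix.of_apply]
  rcases lt_or_ge i.val m with hi | hi
  · rw [Finset.sum_eq_single (⟨i.val + m, by omega⟩ : Fin (m + m))]
    · dsimp only
      split_ifs <;> first | ring1 | (exfalso; omega)
    · intro b _ hb
      have hb' : b.val ≠ i.val + m := fun h => hb (Fin.ext h)
      split_ifs <;> first | ring1 | (exfalso; omega)
    · exact fun h => absurd (Finset.mem_univ _) h
  · rw [Finset.sum_eq_single (⟨i.val - m, by omega⟩ : Fin (m + m))]
    · dsimp only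
      split_ifs <;> first | ring1 | (exfalso; omega)
    · intro b _ hb
      have hb' : b.val ≠ i.val - m := fun h => hb (Fin.ext h)
      split_ifs <;> first | ring1 | (exfalso; omega)
    · exact fun h => absurd (Finset.mem_univ _) h

lemma Jstd_transpose_mul_self (m : ℕ) : (Jstd m)ᵀ * Jstd m = 1 := by
  rw [Jstd_transpose, neg_mul, Jstd_mul_self, neg_neg]

namespace Matrix

section LineThroughIdentity

variable {n R : Type*} [DecidableEq n] [CommRing R]

lemma transpose_mul_add_smul_one_mul [Fintype n] {A h : Matrix n n R} (hA : Aᵀ * A = 1)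
    (hh : Aᵀ * h * A = h) (t : R) : Aᵀ * (h + t • 1) * A = h + t • 1 := by
  rw [mul_add, add_mul, hh, Matrix.mul_smul, mul_one, Matrix.smul_mul, hA]

lemma IsSymm.add_smul_one {h : Matrix n n R} (hh : h.IsSymm) (t : R) : (h + t • 1).IsSymm :=
  hh.add (isSymm_one.smul t)

lemma eval_charpoly_neg [Fintype n] (h : Matrix n n R) (t : R) :
    (-h).charpoly.eval t = (h + t • 1).det := by
  rw [eval_charpoly, sub_neg_eq_add, add_comm, scalar_apply, smul_one_eq_diagonal]

end LineThroughIdentity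

section PosDef

open Unitary
open scoped ComplexOrder

variable {n 𝕜 : Type*} [Fintype n] [DecidableEq n] [RCLike 𝕜]

lemma IsHermitian.posDef_add_smul_one {A : Matrix n n 𝕜} (hA : A.IsHermitian) {t : ℝ}
    (ht : ∀ i, -hA.eigenvalues i < t) : (A + t • (1 : Matrix n n 𝕜)).PosDef := by
  have hshift : A + t • (1 : Matrix n n 𝕜) = conjStarAlgAut 𝕜 _ hA.eigenvectorUnitary
      (diagonal (RCLike.ofReal ∘ (hA.eigenvalues + fun _ => t))) := by
    conv_lhs => rw [hA.spectral_theorem, ← algebraMap_smul 𝕜 t (1 : Matrix n n 𝕜)]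
    rw [← map_one (conjStarAlgAut 𝕜 _ hA.eigenvectorUnitary), ← map_smul, ← map_add]
    congr 1
    ext i j
    by_cases hij : i = j <;> simp [hij, Algebra.algebraMap_eq_smul_one]
  rw [hshift, conjStarAlgAut_apply, isUnit_coe.posDef_star_right_conjugate_iff,
    posDef_diagonal_iff]
  intro i
  rw [Function.comp_apply, RCLike.ofReal_pos, Pi.add_apply]
  linarith [ht i]

lemma IsHermitian.eventually_posDef_add_smul_one {A : Matrix n n 𝕜} (hA : A.IsHermitian) :
    ∀ᶠ t : ℝ in Filter.atTop, (A + t • (1 : Matrix n n 𝕜)).PosDef := by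
  filter_upwards [Filter.eventually_gt_atTop (∑ i, |hA.eigenvalues i|)] with t ht
  refine hA.posDef_add_smul_one fun i => lt_of_le_of_lt ?_ ht
  exact (neg_le_abs _).trans (Finset.single_le_sum (f := fun j => |hA.eigenvalues j|)
    (fun j _ => abs_nonneg _) (Finset.mem_univ i))

end PosDef

end Matrix

section RationalFunctions

variable {K : Type*} [Field K]

/-- The functions on `K` given, off the zeros of `D`, by elements of the localization
`K[X][1/D]`. -/
def rationalFunctionsAway (D : K[X]) : Subalgebra K (K → K) where
  carrier := {f | ∃ (d : ℕ) (F : K[X]), ∀ t, D.eval t ≠ 0 → F.eval t = D.eval t ^ d * f t}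
  mul_mem' := by
    rintro f g ⟨d₁, F₁, hF₁⟩ ⟨d₂, F₂, hF₂⟩
    refine ⟨d₁ + d₂, F₁ * F₂, fun t ht => ?_⟩
    rw [eval_mul, hF₁ t ht, hF₂ t ht, Pi.mul_apply]
    ring
  add_mem' := by
    rintro f g ⟨d₁, F₁, hF₁⟩ ⟨d₂, F₂, hF₂⟩
    refine ⟨d₁ + d₂, F₁ * D ^ d₂ + F₂ * D ^ d₁, fun t ht => ?_⟩
    simp only [eval_add, eval_mul, eval_pow, hF₁ t ht, hF₂ t ht, Pi.add_apply]
    ring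
  algebraMap_mem' a := ⟨0, C a, fun t _ => by simp⟩

namespace rationalFunctionsAway

variable {D : K[X]}

lemma polynomial_eval_mem (F : K[X]) : (fun t => F.eval t) ∈ rationalFunctionsAway D :=
  ⟨0, F, fun t _ => by simp⟩

lemma inv_eval_mem : (fun t => (D.eval t)⁻¹) ∈ rationalFunctionsAway D :=
  ⟨1, 1, fun t ht => by simp [ht]⟩

lemma mvPolynomial_eval_mem {σ : Type*} {v : K → σ → K}
    (hv : ∀ i, (fun t => v t i) ∈ rationalFunctionsAway D) (r : MvPolynomial σ K) :
    (fun t => MvPolynomial.eval (v t) r) ∈ rationalFunctionsAway D := by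
  induction r using MvPolynomial.induction_on with
  | C a =>
    simp only [MvPolynomial.eval_C]
    exact (rationalFunctionsAway D).algebraMap_mem a
  | add p q hp hq =>
    simp only [map_add]
    exact add_mem hp hq
  | mul_X p i hp =>
    simp only [map_mul, MvPolynomial.eval_X]
    exact mul_mem hp (hv i)

lemma eq_zero_of_infinite {f : K → K} (hf : f ∈ rationalFunctionsAway D) {s : Set K}
    (hs : s.Infinite) (hDs : ∀ t ∈ s, D.eval t ≠ 0) (hfs : ∀ t ∈ s, f t = 0)
    {t : K} (ht : D.eval t ≠ 0) : f t = 0 := by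
  obtain ⟨d, F, hF⟩ := hf
  have hF_zero : F = 0 :=
    eq_zero_of_infinite_isRoot F <| hs.mono fun u hu => by
      simp [IsRoot, hF u (hDs u hu), hfs u hu]
  simpa [hF_zero, ht] using hF t ht

end rationalFunctionsAway

end RationalFunctions

def detInvCoords {ι n K : Type*} [Fintype n] [DecidableEq n] [Field K] (x : ι → K)
    (h : Matrix n n K) : ι ⊕ (n × n) ⊕ Unit → K :=
  Sum.elim x (Sum.elim (fun ij => h ij.1 ij.2) (fun _ => h.det⁻¹))

lemma mem_rationalFunctionsAway_eval_detInvCoords_add_smul_one {ι n K : Type*} [Fintype n]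
    [DecidableEq n] [Field K] (x : ι → K) (h : Matrix n n K)
    (r : MvPolynomial (ι ⊕ (n × n) ⊕ Unit) K) :
    (fun t => MvPolynomial.eval (detInvCoords x (h + t • 1)) r) ∈
      rationalFunctionsAway (-h).charpoly := by
  refine rationalFunctionsAway.mvPolynomial_eval_mem ?_ r
  rintro (k | ⟨i, j⟩ | u)
  · simpa [detInvCoords] using rationalFunctionsAway.polynomial_eval_mem (C (x k))
  · convert rationalFunctionsAway.polynomial_eval_mem (C (h i j) + C ((1 : Matrix n n K) i j) * X)
      using 2 with t
    simp only [detInvCoords, Sum.elim_inr, Sum.elim_inl, Matrix.add_apply, Matrix.smul_apply,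
      smul_eq_mul, eval_add, eval_mul, eval_C, eval_X, mul_comm]
  · convert rationalFunctionsAway.inv_eval_mem using 2
    simp [detInvCoords, eval_charpoly_neg]

/-- Let `P`, `Q` be polynomial functions in additional free real variables
`x`, the entries of a `J`-invariant symmetric bilinear form `h` on `ℝ^m`, and the
auxiliary variable `det(h)⁻¹` (defined where `det h ≠ 0`).  If `P = Q` whenever `h` is
positive definite, then `P = Q` on the whole set where `det h ≠ 0`; in particular for `h`
of any nondegenerate signature. -/
theorem polynomial_identity_extends_to_indefinite (m N : ℕ)
    (P Q : (Fin N → ℝ) → Matrix (Fin (m + m)) (Fin (m + m)) ℝ → ℝ)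
    (hP : ∃ p : MvPolynomial ((Fin N) ⊕ (Fin (m + m) × Fin (m + m)) ⊕ Unit) ℝ,
      ∀ x h, h.det ≠ 0 → P x h =
        MvPolynomial.eval (Sum.elim x (Sum.elim (fun ij => h ij.1 ij.2)
          (fun _ => (h.det)⁻¹))) p)
    (hQ : ∃ q : MvPolynomial ((Fin N) ⊕ (Fin (m + m) × Fin (m + m)) ⊕ Unit) ℝ,
      ∀ x h, h.det ≠ 0 → Q x h =
        MvPolynomial.eval (Sum.elim x (Sum.elim (fun ij => h ij.1 ij.2)
          (fun _ => (h.det)⁻¹))) q)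
    (heq : ∀ x (h : Matrix (Fin (m + m)) (Fin (m + m)) ℝ),
      h.IsSymm → (Jstd m)ᵀ * h * Jstd m = h → h.PosDef → P x h = Q x h) :
    ∀ x (h : Matrix (Fin (m + m)) (Fin (m + m)) ℝ),
      h.IsSymm → (Jstd m)ᵀ * h * Jstd m = h → h.det ≠ 0 → P x h = Q x h := by
  rintro x h hsymm hJ hdet
  obtain ⟨p, hp⟩ := hP
  obtain ⟨q, hq⟩ := hQ
  set f := fun t : ℝ => MvPolynomial.eval (detInvCoords x (h + t • 1)) (p - q) with hf
  have hf_posDef : ∀ t ∈ {t : ℝ | (h + t • 1).PosDef}, f t = 0 := fun t ht => by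
    have hPQ := heq x _ (hsymm.add_smul_one t)
      (transpose_mul_add_smul_one_mul (Jstd_transpose_mul_self m) hJ t) ht
    rw [hp x _ ht.det_pos.ne', hq x _ ht.det_pos.ne'] at hPQ
    simp only [hf, map_sub, sub_eq_zero]
    exact hPQ
  have hinf : {t : ℝ | (h + t • 1).PosDef}.Infinite := by
    obtain ⟨a, ha⟩ := (isHermitian_iff_isSymm.mpr hsymm).eventually_posDef_add_smul_one
      |>.exists_forall_of_atTop
    exact (Set.Ici_infinite a).mono ha
  have hf0 : f 0 = 0 :=
    rationalFunctionsAway.eq_zero_of_infinite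
      (mem_rationalFunctionsAway_eval_detInvCoords_add_smul_one x h (p - q)) hinf
      (fun t ht => by rw [eval_charpoly_neg]; exact ht.det_pos.ne') hf_posDef
      (by simpa [eval_charpoly_neg] using hdet)
  simpa [hf, sub_eq_zero, detInvCoords, ← hp x h hdet, ← hq x h hdet] using hf0
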